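/- Define ρ_n²(θ_1,z_1;θ_2,z_2) := Σ_{j=1}^{n} E[ ( f_{n,j}(θ_1,z_1) − f_{n,j}(θ_2,z_2) )² ] with f_{n,j}(θ,z) := (nΔ_n)^{−1/2} · 1_{{j ≤ ⌊nθ⌋}} · 1_{{X_{n,j} ≥ z}}, and define ρ²(θ_1,z_1;θ_2,z_2) := (θ_1 ∧ θ_2)·( ν(z_1 ∧ z_2) − ν(z_1 ∨ z_2) ) + |θ_1 − θ_2| · ν(z_I), where z_I := z_2 if θ_1 ≤ θ_2 and z_I := z_1 otherwise. Then sup { |ρ_n²(θ_1,z_1;θ_2,z_2) − ρ²(θ_1,z_1;θ_2,z_2)| : θ_1, θ_2 ∈ [0,1], z_1, z_2 ≥ a } → 0 as n → ∞. -/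

import Mathlib

open MeasureTheory Filter Topology

/-!
For deterministic index sets `A`, `C`, the second moment
`E[(1_A 1_{X ≥ z₁} - 1_C 1_{X ≥ z₂})²]` is a signed combination of the tail probabilities
`P(X ≥ ·)` at `z₁`, `z₂`, `z₁ ∧ z₂`, `z₁ ∨ z₂` (`indicatorSqDist`). Replacing every tail by
`Δ_n ν` costs `2KΔ_n²` per summand, i.e. `2KΔ_n` after normalising by `nΔ_n`. With the tails
`Δ_n ν` the sum over `j` is exactly `ρ²` at the rounded times `⌊nθᵢ⌋/n`, and `ρ²` is Lipschitz
in the times with constant `3ν(a)`, so the rounding costs `6ν(a)/n`. Hence the supremum is at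
most `2KΔ_n + 6ν(a)/n`.
-/

lemma Nat.cast_sub_eq_max_zero (m k : ℕ) : ((m - k : ℕ) : ℝ) = max ((m : ℝ) - k) 0 := by
  rcases le_total k m with h | h
  · rw [Nat.cast_sub h, max_eq_left (sub_nonneg.2 (Nat.cast_le.2 h))]
  · rw [Nat.sub_eq_zero_of_le h, max_eq_right (sub_nonpos.2 (Nat.cast_le.2 h)), Nat.cast_zero]

lemma abs_natFloor_mul_div_sub_le {n : ℕ} (hn : 0 < n) {θ : ℝ} (hθ : 0 ≤ θ) :
    |(⌊n * θ⌋₊ : ℝ) / n - θ| ≤ 1 / n := by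
  have hn' : (0 : ℝ) < n := Nat.cast_pos.2 hn
  have hfloor : |(⌊n * θ⌋₊ : ℝ) - n * θ| ≤ 1 := abs_le.2
    ⟨by linarith [Nat.lt_floor_add_one ((n : ℝ) * θ)],
      by linarith [Nat.floor_le (mul_nonneg hn'.le hθ)]⟩
  rw [show (⌊n * θ⌋₊ : ℝ) / n - θ = ((⌊n * θ⌋₊ : ℝ) - n * θ) / n by field_simp, abs_div,
    abs_of_pos hn']
  gcongr

lemma tendsto_sSup_of_forall_le {ι : Type*} {l : Filter ι} {S : ι → Set ℝ} {ε : ι → ℝ}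
    (hε : Tendsto ε l (𝓝 0)) (hne : ∀ i, (S i).Nonempty) (hS0 : ∀ i, ∀ r ∈ S i, 0 ≤ r)
    (hSε : ∀ᶠ i in l, ∀ r ∈ S i, r ≤ ε i) :
    Tendsto (fun i => sSup (S i)) l (𝓝 0) :=
  tendsto_of_tendsto_of_tendsto_of_le_of_le' tendsto_const_nhds hε
    (Eventually.of_forall fun i => Real.sSup_nonneg (hS0 i))
    (hSε.mono fun i h => csSup_le (hne i) h)

noncomputable def limitSemimetricSq (ν : ℝ → ℝ) (θ₁ z₁ θ₂ z₂ : ℝ) : ℝ :=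
  min θ₁ θ₂ * (ν (min z₁ z₂) - ν (max z₁ z₂)) + |θ₁ - θ₂| * ν (if θ₁ ≤ θ₂ then z₂ else z₁)

lemma limitSemimetricSq_eq (ν : ℝ → ℝ) (θ₁ z₁ θ₂ z₂ : ℝ) :
    limitSemimetricSq ν θ₁ z₁ θ₂ z₂ = min θ₁ θ₂ * (ν (min z₁ z₂) - ν (max z₁ z₂))
      + max (θ₁ - θ₂) 0 * ν z₁ + max (θ₂ - θ₁) 0 * ν z₂ := by
  unfold limitSemimetricSq
  rcases le_or_gt θ₁ θ₂ with h | h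
  · rw [if_pos h, abs_of_nonpos (sub_nonpos.2 h), max_eq_right (sub_nonpos.2 h),
      max_eq_left (sub_nonneg.2 h)]
    ring
  · rw [if_neg h.not_ge, abs_of_pos (sub_pos.2 h), max_eq_left (sub_pos.2 h).le,
      max_eq_right (sub_neg.2 h).le]
    ring

lemma limitSemimetricSq_mul_mul (ν : ℝ → ℝ) (c : ℝ) {t : ℝ} (ht : 0 ≤ t) (θ₁ z₁ θ₂ z₂ : ℝ) :
    limitSemimetricSq (fun z => c * ν z) (t * θ₁) z₁ (t * θ₂) z₂
      = c * t * limitSemimetricSq ν θ₁ z₁ θ₂ z₂ := by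
  have hpos : ∀ x : ℝ, max (t * x) 0 = t * max x 0 := fun x => by
    rw [mul_max_of_nonneg _ _ ht, mul_zero]
  simp only [limitSemimetricSq_eq, ← mul_sub, ← mul_min_of_nonneg _ _ ht, hpos]
  ring

lemma abs_limitSemimetricSq_sub_le {a : ℝ} {ν : ℝ → ℝ} (hν0 : ∀ z, a ≤ z → 0 ≤ ν z)
    (hνmono : AntitoneOn ν (Set.Ici a)) {z₁ z₂ : ℝ} (hz₁ : a ≤ z₁) (hz₂ : a ≤ z₂)
    (θ₁ θ₂ θ₁' θ₂' : ℝ) :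
    |limitSemimetricSq ν θ₁ z₁ θ₂ z₂ - limitSemimetricSq ν θ₁' z₁ θ₂' z₂|
      ≤ 3 * ν a * (|θ₁ - θ₁'| + |θ₂ - θ₂'|) := by
  set d := |θ₁ - θ₁'| + |θ₂ - θ₂'|
  have hle_a : ∀ z, a ≤ z → ν z ≤ ν a := fun z hz => hνmono (Set.mem_Ici.2 le_rfl) hz hz
  have hmin : a ≤ min z₁ z₂ := le_min hz₁ hz₂
  have hmax : a ≤ max z₁ z₂ := hz₁.trans (le_max_left _ _)
  have hweight : ∀ {w x x' : ℝ}, 0 ≤ w → w ≤ ν a → |x - x'| ≤ d →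
      |x * w - x' * w| ≤ ν a * d := by
    intro w x x' hw hwa hx
    rw [← sub_mul, abs_mul, abs_of_nonneg hw, mul_comm]
    exact mul_le_mul hwa hx (abs_nonneg _) (hw.trans hwa)
  have hd_min : |min θ₁ θ₂ - min θ₁' θ₂'| ≤ d :=
    (abs_min_sub_min_le_max _ _ _ _).trans (max_le (by simp [d]) (by simp [d]))
  have hd_pos : ∀ {x y x' y' : ℝ}, |x - x'| + |y - y'| ≤ d →
      |max (x - y) 0 - max (x' - y') 0| ≤ d := fun {x y x' y'} h => calc
    _ ≤ |(x - x') - (y - y')| := (abs_max_sub_max_le_abs _ _ _).trans_eq (by ring_nf)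
    _ ≤ d := (abs_sub _ _).trans h
  rw [limitSemimetricSq_eq, limitSemimetricSq_eq]
  calc _ = |(min θ₁ θ₂ * (ν (min z₁ z₂) - ν (max z₁ z₂))
              - min θ₁' θ₂' * (ν (min z₁ z₂) - ν (max z₁ z₂)))
          + (max (θ₁ - θ₂) 0 * ν z₁ - max (θ₁' - θ₂') 0 * ν z₁)
          + (max (θ₂ - θ₁) 0 * ν z₂ - max (θ₂' - θ₁') 0 * ν z₂)| := by congr 1; ring
    _ ≤ ν a * d + ν a * d + ν a * d := by
      refine (abs_add_three _ _ _).trans (add_le_add_three ?_ ?_ ?_)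
      · refine hweight (sub_nonneg.2 (hνmono hmin hmax (min_le_max))) ?_ hd_min
        linarith [hle_a _ hmin, hν0 _ hmax]
      · exact hweight (hν0 _ hz₁) (hle_a _ hz₁) (hd_pos le_rfl)
      · exact hweight (hν0 _ hz₂) (hle_a _ hz₂) (hd_pos (by rw [add_comm]))
    _ = 3 * ν a * d := by ring

/-- With `p z = P(X ≥ z)` this is `E[(1_A 1_{X ≥ z₁} - 1_C 1_{X ≥ z₂})²]`
(`integral_sq_sub_ite_mul_ite`). -/
noncomputable def indicatorSqDist (p : ℝ → ℝ) (A C : Prop) [Decidable A] [Decidable C]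
    (z₁ z₂ : ℝ) : ℝ :=
  if A ∧ C then p (min z₁ z₂) - p (max z₁ z₂) else if A then p z₁ else if C then p z₂ else 0

lemma ite_le_eq_indicator {Ω : Type*} (X : Ω → ℝ) (z : ℝ) :
    (fun ω => if z ≤ X ω then (1 : ℝ) else 0) = {ω | z ≤ X ω}.indicator 1 := by
  ext ω
  simp [Set.indicator_apply]

section Integral

variable {Ω : Type*} [MeasurableSpace Ω] {P : Measure Ω} {X : Ω → ℝ}

lemma integrable_ite_le [IsFiniteMeasure P] (hX : Measurable X) (z : ℝ) :
    Integrable (fun ω => if z ≤ X ω then (1 : ℝ) else 0) P := by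
  rw [ite_le_eq_indicator]
  exact (integrable_const 1).indicator (measurableSet_le measurable_const hX)

lemma integral_ite_le (hX : Measurable X) (z : ℝ) :
    ∫ ω, (if z ≤ X ω then (1 : ℝ) else 0) ∂P = (P {ω | z ≤ X ω}).toReal := by
  rw [ite_le_eq_indicator, integral_indicator_one (measurableSet_le measurable_const hX)]
  rfl

lemma sq_sub_ite_mul_ite (A C : Prop) [Decidable A] [Decidable C] (z₁ z₂ x : ℝ) :
    ((if A then (1 : ℝ) else 0) * (if z₁ ≤ x then 1 else 0)
        - (if C then (1 : ℝ) else 0) * (if z₂ ≤ x then 1 else 0)) ^ 2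
      = indicatorSqDist (fun z => if z ≤ x then 1 else 0) A C z₁ z₂ := by
  unfold indicatorSqDist
  simp only [min_le_iff, max_le_iff]
  split_ifs <;> first | (exfalso; tauto) | norm_num

lemma integral_indicatorSqDist [IsFiniteMeasure P] (hX : Measurable X) (A C : Prop)
    [Decidable A] [Decidable C] (z₁ z₂ : ℝ) :
    ∫ ω, indicatorSqDist (fun z => if z ≤ X ω then 1 else 0) A C z₁ z₂ ∂P
      = indicatorSqDist (fun z => (P {ω | z ≤ X ω}).toReal) A C z₁ z₂ := by
  unfold indicatorSqDist
  split_ifs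
  · rw [integral_sub (integrable_ite_le hX _) (integrable_ite_le hX _), integral_ite_le hX,
      integral_ite_le hX]
  · exact integral_ite_le hX _
  · exact integral_ite_le hX _
  · exact integral_zero _ _

lemma integral_sq_sub_ite_mul_ite [IsFiniteMeasure P] (hX : Measurable X) (c : ℝ)
    (A C : Prop) [Decidable A] [Decidable C] (z₁ z₂ : ℝ) :
    ∫ ω, (c * ((if A then (1 : ℝ) else 0) * (if z₁ ≤ X ω then 1 else 0))
        - c * ((if C then (1 : ℝ) else 0) * (if z₂ ≤ X ω then 1 else 0))) ^ 2 ∂P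
      = c ^ 2 * indicatorSqDist (fun z => (P {ω | z ≤ X ω}).toReal) A C z₁ z₂ := by
  simp_rw [← mul_sub, mul_pow, sq_sub_ite_mul_ite]
  rw [integral_const_mul, integral_indicatorSqDist hX]

end Integral

lemma sum_indicatorSqDist (p : ℝ → ℝ) {n m₁ m₂ : ℕ} (h₁ : m₁ ≤ n) (h₂ : m₂ ≤ n) (z₁ z₂ : ℝ) :
    ∑ j : Fin n, indicatorSqDist p ((j : ℕ) < m₁) ((j : ℕ) < m₂) z₁ z₂
      = limitSemimetricSq p m₁ z₁ m₂ z₂ := by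
  have hsplit : ∀ j : ℕ, indicatorSqDist p (j < m₁) (j < m₂) z₁ z₂
      = (if j ∈ Finset.range (min m₁ m₂) then p (min z₁ z₂) - p (max z₁ z₂) else 0)
        + (if j ∈ Finset.Ico m₂ m₁ then p z₁ else 0)
        + (if j ∈ Finset.Ico m₁ m₂ then p z₂ else 0) := by
    intro j
    unfold indicatorSqDist
    simp only [Finset.mem_range, Finset.mem_Ico, lt_min_iff]
    split_ifs <;> first | (exfalso; omega) | ring
  have hsub : ∀ {k l : ℕ}, l ≤ n → Finset.range n ∩ Finset.Ico k l = Finset.Ico k l :=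
    fun hl => Finset.inter_eq_right.2 fun j hj => by
      simp only [Finset.mem_Ico, Finset.mem_range] at hj ⊢; omega
  rw [Fin.sum_univ_eq_sum_range (fun j => indicatorSqDist p (j < m₁) (j < m₂) z₁ z₂),
    limitSemimetricSq_eq]
  simp only [hsplit, Finset.sum_add_distrib, Finset.sum_ite_mem, Finset.sum_const, nsmul_eq_mul,
    Finset.range_inter_range, hsub h₁, hsub h₂, Finset.card_range, Nat.card_Ico,
    min_eq_right (min_le_left _ _ |>.trans h₁), Nat.cast_min, Nat.cast_sub_eq_max_zero]

lemma abs_indicatorSqDist_sub_le {p q : ℝ → ℝ} {a ε z₁ z₂ : ℝ}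
    (hpq : ∀ z, a ≤ z → |p z - q z| ≤ ε) (hz₁ : a ≤ z₁) (hz₂ : a ≤ z₂)
    (A C : Prop) [Decidable A] [Decidable C] :
    |indicatorSqDist p A C z₁ z₂ - indicatorSqDist q A C z₁ z₂| ≤ 2 * ε := by
  have hε : 0 ≤ ε := (abs_nonneg _).trans (hpq z₁ hz₁)
  unfold indicatorSqDist
  split_ifs
  · calc _ = |(p (min z₁ z₂) - q (min z₁ z₂)) - (p (max z₁ z₂) - q (max z₁ z₂))| := by
          congr 1; ring
      _ ≤ ε + ε := (abs_sub _ _).trans <| add_le_add (hpq _ (le_min hz₁ hz₂))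
          (hpq _ (hz₁.trans (le_max_left _ _)))
      _ = 2 * ε := by ring
  · linarith [hpq z₁ hz₁]
  · linarith [hpq z₂ hz₂]
  · simpa using hε

section EmpiricalSemimetric

variable {Ω : Type*} [MeasurableSpace Ω] {n : ℕ}

noncomputable def empiricalSemimetricSq (P : Measure Ω) (X : Fin n → Ω → ℝ)
    (Δ θ₁ z₁ θ₂ z₂ : ℝ) : ℝ :=
  ∑ j : Fin n, ∫ ω,
    ((Real.sqrt ((n : ℝ) * Δ))⁻¹ *
        ((if (j : ℕ) < ⌊(n : ℝ) * θ₁⌋₊ then (1 : ℝ) else 0) * (if z₁ ≤ X j ω then (1 : ℝ) else 0))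
      - (Real.sqrt ((n : ℝ) * Δ))⁻¹ *
        ((if (j : ℕ) < ⌊(n : ℝ) * θ₂⌋₊ then (1 : ℝ) else 0) * (if z₂ ≤ X j ω then (1 : ℝ) else 0)))
      ^ 2 ∂P

lemma empiricalSemimetricSq_eq {P : Measure Ω} [IsFiniteMeasure P] {X : Fin n → Ω → ℝ}
    (hX : ∀ j, Measurable (X j)) {Δ : ℝ} (hΔ : 0 ≤ Δ) (θ₁ z₁ θ₂ z₂ : ℝ) :
    empiricalSemimetricSq P X Δ θ₁ z₁ θ₂ z₂
      = ((n : ℝ) * Δ)⁻¹ * ∑ j : Fin n, indicatorSqDist (fun z => (P {ω | z ≤ X j ω}).toReal)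
          ((j : ℕ) < ⌊(n : ℝ) * θ₁⌋₊) ((j : ℕ) < ⌊(n : ℝ) * θ₂⌋₊) z₁ z₂ := by
  simp only [empiricalSemimetricSq, Finset.mul_sum, integral_sq_sub_ite_mul_ite (hX _), inv_pow,
    Real.sq_sqrt (mul_nonneg n.cast_nonneg hΔ)]

end EmpiricalSemimetric

lemma inv_mul_sum_indicatorSqDist_const_mul (ν : ℝ → ℝ) {n m₁ m₂ : ℕ} (hn : 0 < n)
    (h₁ : m₁ ≤ n) (h₂ : m₂ ≤ n) {Δ : ℝ} (hΔ : Δ ≠ 0) (z₁ z₂ : ℝ) :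
    ((n : ℝ) * Δ)⁻¹ * ∑ j : Fin n,
        indicatorSqDist (fun z => Δ * ν z) ((j : ℕ) < m₁) ((j : ℕ) < m₂) z₁ z₂
      = limitSemimetricSq ν ((m₁ : ℝ) / n) z₁ ((m₂ : ℝ) / n) z₂ := by
  have hn' : (n : ℝ) ≠ 0 := Nat.cast_ne_zero.2 hn.ne'
  have h := limitSemimetricSq_mul_mul ν Δ n.cast_nonneg ((m₁ : ℝ) / n) z₁ ((m₂ : ℝ) / n) z₂
  rw [mul_div_cancel₀ _ hn', mul_div_cancel₀ _ hn'] at h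
  rw [sum_indicatorSqDist _ h₁ h₂, h]
  field_simp

theorem abs_empiricalSemimetricSq_sub_limitSemimetricSq_le {Ω : Type*} [MeasurableSpace Ω]
    {P : Measure Ω} [IsFiniteMeasure P] {n : ℕ} (hn : 0 < n) {X : Fin n → Ω → ℝ}
    (hX : ∀ j, Measurable (X j)) {a : ℝ} {ν : ℝ → ℝ}
    (hν0 : ∀ z, a ≤ z → 0 ≤ ν z) (hνmono : AntitoneOn ν (Set.Ici a)) {Δ K : ℝ} (hΔ : 0 < Δ)
    (htail : ∀ j z, a ≤ z → |(P {ω | z ≤ X j ω}).toReal - Δ * ν z| ≤ K * Δ ^ 2)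
    {θ₁ θ₂ z₁ z₂ : ℝ} (hθ₁ : θ₁ ∈ Set.Icc (0 : ℝ) 1) (hθ₂ : θ₂ ∈ Set.Icc (0 : ℝ) 1)
    (hz₁ : a ≤ z₁) (hz₂ : a ≤ z₂) :
    |empiricalSemimetricSq P X Δ θ₁ z₁ θ₂ z₂ - limitSemimetricSq ν θ₁ z₁ θ₂ z₂|
      ≤ 2 * K * Δ + 6 * ν a / n := by
  have hn' : (0 : ℝ) < n := Nat.cast_pos.2 hn
  have hm : ∀ θ ∈ Set.Icc (0 : ℝ) 1, ⌊(n : ℝ) * θ⌋₊ ≤ n := fun θ hθ =>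
    Nat.floor_le_of_le (mul_le_of_le_one_right hn'.le hθ.2)
  have htail_error : |empiricalSemimetricSq P X Δ θ₁ z₁ θ₂ z₂
      - limitSemimetricSq ν (⌊(n : ℝ) * θ₁⌋₊ / n) z₁ (⌊(n : ℝ) * θ₂⌋₊ / n) z₂| ≤ 2 * K * Δ := by
    rw [empiricalSemimetricSq_eq hX hΔ.le, ← inv_mul_sum_indicatorSqDist_const_mul ν hn
      (hm θ₁ hθ₁) (hm θ₂ hθ₂) hΔ.ne', ← mul_sub, ← Finset.sum_sub_distrib, abs_mul,
      abs_of_pos (inv_pos.2 (mul_pos hn' hΔ))]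
    calc _ ≤ ((n : ℝ) * Δ)⁻¹ * (n * (2 * (K * Δ ^ 2))) := by
          gcongr
          refine (Finset.abs_sum_le_sum_abs _ _).trans ?_
          simpa using Finset.sum_le_card_nsmul Finset.univ _ _
            fun j _ => abs_indicatorSqDist_sub_le (htail j) hz₁ hz₂ _ _
      _ = 2 * K * Δ := by field_simp
  have hfloor_error : |limitSemimetricSq ν (⌊(n : ℝ) * θ₁⌋₊ / n) z₁ (⌊(n : ℝ) * θ₂⌋₊ / n) z₂
      - limitSemimetricSq ν θ₁ z₁ θ₂ z₂| ≤ 6 * ν a / n := by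
    refine (abs_limitSemimetricSq_sub_le hν0 hνmono hz₁ hz₂ _ _ _ _).trans ?_
    have := hν0 a le_rfl
    calc _ ≤ 3 * ν a * (1 / n + 1 / n) := by
          gcongr
          · exact abs_natFloor_mul_div_sub_le hn hθ₁.1
          · exact abs_natFloor_mul_div_sub_le hn hθ₂.1
      _ = 6 * ν a / n := by ring
  linarith [abs_sub_le (empiricalSemimetricSq P X Δ θ₁ z₁ θ₂ z₂)
    (limitSemimetricSq ν (⌊(n : ℝ) * θ₁⌋₊ / n) z₁ (⌊(n : ℝ) * θ₂⌋₊ / n) z₂)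
    (limitSemimetricSq ν θ₁ z₁ θ₂ z₂)]

theorem stmt8_general (a : ℝ) (ν : ℝ → ℝ)
    (hν0 : ∀ z, a ≤ z → 0 ≤ ν z) (hνmono : AntitoneOn ν (Set.Ici a))
    (Ω : ℕ → Type*) [∀ n, MeasurableSpace (Ω n)]
    (P : ∀ n, Measure (Ω n)) [∀ n, IsProbabilityMeasure (P n)]
    (Δ : ℕ → ℝ) (hΔpos : ∀ n, 0 < Δ n)
    (hΔ0 : Tendsto Δ atTop (nhds 0))
    (K : ℝ)
    (X : ∀ n, Fin n → Ω n → ℝ) (hX : ∀ n j, Measurable (X n j))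
    (htail : ∀ n : ℕ, 1 ≤ n → ∀ j : Fin n, ∀ z, a ≤ z →
      |((P n) {ω | z ≤ X n j ω}).toReal - Δ n * ν z| ≤ K * (Δ n) ^ 2) :
    Tendsto (fun n : ℕ =>
      sSup {r : ℝ | ∃ θ₁, θ₁ ∈ Set.Icc (0 : ℝ) 1 ∧ ∃ θ₂, θ₂ ∈ Set.Icc (0 : ℝ) 1 ∧
        ∃ z₁, a ≤ z₁ ∧ ∃ z₂, a ≤ z₂ ∧
        r = |(∑ j : Fin n, ∫ ω,
                ((Real.sqrt ((n : ℝ) * Δ n))⁻¹ *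
                    ((if (j : ℕ) < ⌊(n : ℝ) * θ₁⌋₊ then (1 : ℝ) else 0) *
                      (if z₁ ≤ X n j ω then (1 : ℝ) else 0))
                  - (Real.sqrt ((n : ℝ) * Δ n))⁻¹ *
                    ((if (j : ℕ) < ⌊(n : ℝ) * θ₂⌋₊ then (1 : ℝ) else 0) *
                      (if z₂ ≤ X n j ω then (1 : ℝ) else 0))) ^ 2 ∂(P n))
              - (min θ₁ θ₂ * (ν (min z₁ z₂) - ν (max z₁ z₂))
                  + |θ₁ - θ₂| * ν (if θ₁ ≤ θ₂ then z₂ else z₁))|})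
      atTop (nhds 0) := by
  refine tendsto_sSup_of_forall_le (ε := fun n => 2 * K * Δ n + 6 * ν a / n) ?_ ?_ ?_ ?_
  · simpa using (hΔ0.const_mul (2 * K)).add (tendsto_const_div_atTop_nhds_zero_nat (6 * ν a))
  · exact fun n => ⟨_, 0, Set.left_mem_Icc.2 zero_le_one, 0, Set.left_mem_Icc.2 zero_le_one,
      a, le_rfl, a, le_rfl, rfl⟩
  · rintro n r ⟨θ₁, -, θ₂, -, z₁, -, z₂, -, rfl⟩
    exact abs_nonneg _
  · filter_upwards [eventually_ge_atTop 1] with n hn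
    rintro r ⟨θ₁, hθ₁, θ₂, hθ₂, z₁, hz₁, z₂, hz₂, rfl⟩
    exact abs_empiricalSemimetricSq_sub_limitSemimetricSq_le hn (hX n) hν0 hνmono (hΔpos n)
      (htail n hn) hθ₁ hθ₂ hz₁ hz₂

/-- For a tail-estimate triangular array, the L²-semimetrics
`ρ_n²(θ₁,z₁;θ₂,z₂) = Σ_j E[(f_{n,j}(θ₁,z₁) − f_{n,j}(θ₂,z₂))²]` of the indicator
processes `f_{n,j}(θ,z) = (nΔ_n)^{-1/2} 1_{j ≤ ⌊nθ⌋} 1_{X_{n,j} ≥ z}` (indexed here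
by `j : Fin n`, `j` being the 0-based index) converge uniformly on
`([0,1] × [a,∞))²` to the limiting semimetric
`ρ²(θ₁,z₁;θ₂,z₂) = (θ₁∧θ₂)(ν(z₁∧z₂) − ν(z₁∨z₂)) + |θ₁−θ₂| ν(z_I)`,
where `z_I = z₂` if `θ₁ ≤ θ₂` and `z_I = z₁` otherwise. -/
theorem stmt8 (a : ℝ) (ha : 0 < a) (ν : ℝ → ℝ)
    (hν0 : ∀ z, a ≤ z → 0 ≤ ν z) (hνmono : AntitoneOn ν (Set.Ici a))
    (Ω : ℕ → Type*) [∀ n, MeasurableSpace (Ω n)]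
    (P : ∀ n, Measure (Ω n)) [∀ n, IsProbabilityMeasure (P n)]
    (Δ : ℕ → ℝ) (hΔpos : ∀ n, 0 < Δ n)
    (hΔ0 : Tendsto Δ atTop (nhds 0))
    (hnΔ : Tendsto (fun n : ℕ => (n : ℝ) * Δ n) atTop atTop)
    (K : ℝ) (hK : 0 < K)
    (X : ∀ n, Fin n → Ω n → ℝ) (hX : ∀ n j, Measurable (X n j))
    (htail : ∀ n : ℕ, 1 ≤ n → ∀ j : Fin n, ∀ z, a ≤ z →
      |((P n) {ω | z ≤ X n j ω}).toReal - Δ n * ν z| ≤ K * (Δ n) ^ 2) :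
    Tendsto (fun n : ℕ =>
      sSup {r : ℝ | ∃ θ₁, θ₁ ∈ Set.Icc (0 : ℝ) 1 ∧ ∃ θ₂, θ₂ ∈ Set.Icc (0 : ℝ) 1 ∧
        ∃ z₁, a ≤ z₁ ∧ ∃ z₂, a ≤ z₂ ∧
        r = |(∑ j : Fin n, ∫ ω,
                ((Real.sqrt ((n : ℝ) * Δ n))⁻¹ *
                    ((if (j : ℕ) < ⌊(n : ℝ) * θ₁⌋₊ then (1 : ℝ) else 0) *
                      (if z₁ ≤ X n j ω then (1 : ℝ) else 0))
                  - (Real.sqrt ((n : ℝ) * Δ n))⁻¹ *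
                    ((if (j : ℕ) < ⌊(n : ℝ) * θ₂⌋₊ then (1 : ℝ) else 0) *
                      (if z₂ ≤ X n j ω then (1 : ℝ) else 0))) ^ 2 ∂(P n))
              - (min θ₁ θ₂ * (ν (min z₁ z₂) - ν (max z₁ z₂))
                  + |θ₁ - θ₂| * ν (if θ₁ ≤ θ₂ then z₂ else z₁))|})
      atTop (nhds 0) :=
  stmt8_general a ν hν0 hνmono Ω P Δ hΔpos hΔ0 K X hX htail
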